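/- Let L be a hyperbolic lattice and suppose g, g' ∈ Aut(𝒟_L) each fix a unique cusp, e and e' respectively, and that g and g' commute with g' of infinite order. If g(e') ≠ e' then g' fixes the vector e' + g(e') of positive square, contradicting that g' has infinite order; hence g(e') = e'. -/

import Mathlib

section ChamberMachinery

variable {L : Type*} [AddCommGroup L] [Module ℤ L]

/-- An isometry of the lattice `(L, B)`. -/
def IsIsometry (B : L →ₗ[ℤ] L →ₗ[ℤ] ℤ) (g : L ≃ₗ[ℤ] L) : Prop :=
  ∀ x y : L, B (g x) (g y) = B x y

/-- `x₀` is a point of the positive cone lying on no mirror of a `(−2)`-root; it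
determines a fundamental chamber `𝒟_L` for the Weyl group. -/
def GenericPoint (B : L →ₗ[ℤ] L →ₗ[ℤ] ℤ) (x₀ : L) : Prop :=
  0 < B x₀ x₀ ∧ ∀ r : L, B r r = -2 → B x₀ r ≠ 0

/-- The `(−2)`-roots that are positive with respect to the chamber determined by `x₀`. -/
def PosRoots (B : L →ₗ[ℤ] L →ₗ[ℤ] ℤ) (x₀ : L) : Set L :=
  {r : L | B r r = -2 ∧ 0 < B x₀ r}

/-- A vector is fundamental if it lies in the (closure of the) fundamental chamber
`𝒟_L` determined by `x₀`, i.e. it lies in the closure of the positive cone and pairs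
nonnegatively with all positive `(−2)`-roots. -/
def IsFund (B : L →ₗ[ℤ] L →ₗ[ℤ] ℤ) (x₀ : L) (v : L) : Prop :=
  0 ≤ B v v ∧ 0 ≤ B v x₀ ∧ ∀ r ∈ PosRoots B x₀, 0 ≤ B v r

/-- A nonzero vector is positive if it has nonnegative inner product with all
fundamental vectors. -/
def IsPosVec (B : L →ₗ[ℤ] L →ₗ[ℤ] ℤ) (x₀ : L) (v : L) : Prop :=
  v ≠ 0 ∧ ∀ u : L, IsFund B x₀ u → 0 ≤ B v u

/-- A positive `(−2)`-root `r` is simple if `r − r'` is not positive for any other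
positive `(−2)`-root `r'`. -/
def IsSimpleRoot (B : L →ₗ[ℤ] L →ₗ[ℤ] ℤ) (x₀ : L) (r : L) : Prop :=
  r ∈ PosRoots B x₀ ∧ ∀ r' ∈ PosRoots B x₀, r' ≠ r → ¬ IsPosVec B x₀ (r - r')

/-- A primitive vector of a lattice. -/
def IsPrimitiveVec (v : L) : Prop := ∀ (m : ℤ) (u : L), v = m • u → IsUnit m

/-- A cusp of the fundamental domain: a primitive isotropic vector in `L ∩ 𝒟_L`. -/
def IsLatticeCusp (B : L →ₗ[ℤ] L →ₗ[ℤ] ℤ) (x₀ : L) (e : L) : Prop :=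
  B e e = 0 ∧ IsPrimitiveVec e ∧ IsFund B x₀ e

end ChamberMachinery

/-!
Since `g` and `g'` commute, `g'` fixes `g e'`, so by uniqueness of the cusp fixed by `g'` it
suffices that `g e'` is a cusp. Being an isometry preserving the positive roots, `g` preserves
everything in that notion except possibly the half of the light cone containing `e'`. That half
is preserved because `g` fixes the cusp `e`: two isotropic vectors in the positive half of the
light cone pair nonnegatively, and pair to zero only when proportional, so `g e'` cannot land in
the negative half.
-/

section LightCone

variable {L : Type*} [AddCommGroup L] [Module ℤ L]

def NegDefOnOrth (B : L →ₗ[ℤ] L →ₗ[ℤ] ℤ) (v : L) : Prop :=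
  ∀ x : L, B v x = 0 → x ≠ 0 → B x x < 0

lemma bilin_smul_sub_smul_left (B : L →ₗ[ℤ] L →ₗ[ℤ] ℤ) (a b : ℤ) (x y z : L) :
    B (a • x - b • y) z = a * B x z - b * B y z := by
  simp only [map_sub, map_zsmul, LinearMap.sub_apply, LinearMap.smul_apply, smul_eq_mul]

lemma bilin_smul_sub_smul_right (B : L →ₗ[ℤ] L →ₗ[ℤ] ℤ) (a b : ℤ) (x y z : L) :
    B z (a • x - b • y) = a * B z x - b * B z y := by
  simp only [map_sub, map_zsmul, smul_eq_mul]

lemma bilin_smul_sub_smul_self (B : L →ₗ[ℤ] L →ₗ[ℤ] ℤ) (a b : ℤ) (x y : L) :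
    B (a • x - b • y) (a • x - b • y) =
      a * a * B x x - a * b * B x y - b * a * B y x + b * b * B y y := by
  rw [bilin_smul_sub_smul_left, bilin_smul_sub_smul_right, bilin_smul_sub_smul_right]
  ring

variable {B : L →ₗ[ℤ] L →ₗ[ℤ] ℤ}

/-- In signature `(1, n)` every vector of positive square can serve as the time direction. -/
lemma NegDefOnOrth.of_pos (hsym : ∀ x y : L, B x y = B y x) {v w : L}
    (hv : NegDefOnOrth B v) (hw : 0 < B w w) : NegDefOnOrth B w := by
  intro x hwx hx
  by_contra! hxx
  have hvx : B v x ≠ 0 := fun h => (hv x h hx).not_ge hxx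
  -- `t` lies in the plane spanned by `w` and `x`, which is positive semidefinite, and in `v^⊥`
  set t : L := B v x • w - B v w • x
  have hvt : B v t = 0 := by
    rw [bilin_smul_sub_smul_right]; ring
  have htt : B t t = B v x * B v x * B w w + B v w * B v w * B x x := by
    rw [bilin_smul_sub_smul_self, hwx, hsym x w, hwx]; ring
  have htt_pos : 0 < B t t := by
    rw [htt]
    exact add_pos_of_pos_of_nonneg (mul_pos (mul_self_pos.mpr hvx) hw)
      (mul_nonneg (mul_self_nonneg _) hxx)
  have ht : t ≠ 0 := by
    rintro h
    simp [h] at htt_pos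
  exact (hv t hvt ht).not_gt htt_pos

lemma pos_of_isotropic_of_nonneg (hsym : ∀ x y : L, B x y = B y x) {x₀ z : L}
    (hx₀ : NegDefOnOrth B x₀) (hz : z ≠ 0) (hzz : B z z = 0) (hzx₀ : 0 ≤ B z x₀) :
    0 < B z x₀ := by
  refine hzx₀.lt_of_ne fun h => ?_
  exact (hx₀ z (by rw [hsym, h]) hz).ne hzz

lemma isotropic_smul_eq_or_inner_pos (hsym : ∀ x y : L, B x y = B y x) {x₀ a b : L}
    (hx₀ : NegDefOnOrth B x₀) (haa : B a a = 0) (hbb : B b b = 0)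
    (hax₀ : 0 < B a x₀) (hbx₀ : 0 < B b x₀) :
    B b x₀ • a = B a x₀ • b ∨ 0 < B a b := by
  set d : L := B b x₀ • a - B a x₀ • b
  by_cases hd : d = 0
  · exact Or.inl (sub_eq_zero.mp hd)
  right
  have hx₀d : B x₀ d = 0 := by
    rw [bilin_smul_sub_smul_right, hsym x₀ a, hsym x₀ b]; ring
  have hdd : B d d = -2 * B b x₀ * B a x₀ * B a b := by
    rw [bilin_smul_sub_smul_self, haa, hbb, hsym b a]; ring
  have := hx₀ d hx₀d hd
  nlinarith [mul_pos hbx₀ hax₀]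

lemma isotropic_inner_nonneg (hsym : ∀ x y : L, B x y = B y x) {x₀ a b : L}
    (hx₀ : NegDefOnOrth B x₀) (haa : B a a = 0) (hbb : B b b = 0)
    (hax₀ : 0 < B a x₀) (hbx₀ : 0 < B b x₀) : 0 ≤ B a b := by
  rcases isotropic_smul_eq_or_inner_pos hsym hx₀ haa hbb hax₀ hbx₀ with h | h
  · have hab := congrArg (B a) h
    simp only [map_zsmul, smul_eq_mul, haa, mul_zero] at hab
    nlinarith
  · exact h.le

lemma isotropic_smul_eq_of_inner_eq_zero (hsym : ∀ x y : L, B x y = B y x) {x₀ a b : L}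
    (hx₀ : NegDefOnOrth B x₀) (haa : B a a = 0) (hbb : B b b = 0)
    (hax₀ : 0 < B a x₀) (hbx₀ : 0 < B b x₀) (hab : B a b = 0) :
    B b x₀ • a = B a x₀ • b :=
  (isotropic_smul_eq_or_inner_pos hsym hx₀ haa hbb hax₀ hbx₀).resolve_right hab.not_gt

lemma IsIsometry.inner_pos_of_fixed_isotropic (hsym : ∀ x y : L, B x y = B y x)
    {x₀ e z : L} {g : L ≃ₗ[ℤ] L} (hg : IsIsometry B g) (hx₀ : NegDefOnOrth B x₀)
    (hee : B e e = 0) (hex₀ : 0 < B e x₀) (hge : g e = e)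
    (hzz : B z z = 0) (hzx₀ : 0 < B z x₀) : 0 < B (g z) x₀ := by
  by_contra! hgz
  have hz : z ≠ 0 := by
    rintro rfl
    simp at hzx₀
  have hngz : 0 < B (-g z) x₀ :=
    pos_of_isotropic_of_nonneg hsym hx₀ (neg_ne_zero.mpr (g.map_ne_zero_iff.mpr hz))
      (by simp [hg z z, hzz]) (by simpa using hgz)
  have hez : B e z = 0 := by
    have hegz : B e (g z) = B e z := by simpa only [hge] using hg e z
    have h₁ := isotropic_inner_nonneg hsym hx₀ hee hzz hex₀ hzx₀
    have h₂ := isotropic_inner_nonneg hsym hx₀ hee (by simp [hg z z, hzz]) hex₀ hngz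
    simp only [map_neg] at h₂
    omega
  have hprop := congrArg (fun y => B (g y) x₀)
    (isotropic_smul_eq_of_inner_eq_zero hsym hx₀ hee hzz hex₀ hzx₀ hez)
  simp only [map_zsmul, LinearMap.smul_apply, smul_eq_mul, hge] at hprop
  nlinarith [mul_pos hzx₀ hex₀]

end LightCone

section Cusps

variable {L : Type*} [AddCommGroup L]

lemma IsPrimitiveVec.ne_zero {v : L} (hv : IsPrimitiveVec v) : v ≠ 0 := by
  rintro rfl
  simpa using hv 0 0 (by simp)

lemma IsPrimitiveVec.map {M : Type*} [AddCommGroup M] [Module ℤ L] [Module ℤ M]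
    (g : L ≃ₗ[ℤ] M) {v : L} (hv : IsPrimitiveVec v) : IsPrimitiveVec (g v) := by
  intro m u hu
  exact hv m (g.symm u) (by simpa using congrArg g.symm hu)

variable [Module ℤ L] {B : L →ₗ[ℤ] L →ₗ[ℤ] ℤ} {x₀ c : L}

lemma IsLatticeCusp.inner_pos (hsym : ∀ x y : L, B x y = B y x) (hx₀ : NegDefOnOrth B x₀)
    (hc : IsLatticeCusp B x₀ c) : 0 < B c x₀ :=
  pos_of_isotropic_of_nonneg hsym hx₀ hc.2.1.ne_zero hc.1 hc.2.2.2.1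

lemma IsLatticeCusp.map {g : L ≃ₗ[ℤ] L}
    (hc : IsLatticeCusp B x₀ c) (hg : IsIsometry B g)
    (hgD : ⇑g '' PosRoots B x₀ = PosRoots B x₀) (hgcx₀ : 0 ≤ B (g c) x₀) :
    IsLatticeCusp B x₀ (g c) := by
  obtain ⟨hcc, hprim, -, -, hroots⟩ := hc
  refine ⟨by rw [hg, hcc], hprim.map g, by rw [hg, hcc], hgcx₀, ?_⟩
  intro r hr
  rw [← hgD] at hr
  obtain ⟨r, hr, rfl⟩ := hr
  rw [hg]
  exact hroots r hr

end Cusps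

theorem stmt18_general (L : Type*) [AddCommGroup L] [Module ℤ L]
    (B : L →ₗ[ℤ] L →ₗ[ℤ] ℤ)
    (hsym : ∀ x y : L, B x y = B y x)
    (hhyp : ∃ v : L, 0 < B v v ∧ ∀ x : L, B v x = 0 → x ≠ 0 → B x x < 0)
    (x₀ : L) (hx₀ : GenericPoint B x₀)
    (g g' : L ≃ₗ[ℤ] L)
    (hgiso : IsIsometry B g)
    (hgD : ⇑g '' PosRoots B x₀ = PosRoots B x₀)
    (e e' : L) (he : IsLatticeCusp B x₀ e) (he' : IsLatticeCusp B x₀ e')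
    (hge : g e = e) (hg'e' : g' e' = e')
    -- e is the unique cusp fixed by g, e' the unique cusp fixed by g'
    (huniqg' : ∀ c : L, IsLatticeCusp B x₀ c → g' c = c → c = e')
    (hcomm : g * g' = g' * g) :
    g e' = e' := by
  obtain ⟨v, -, hv⟩ := hhyp
  have hx₀' : NegDefOnOrth B x₀ := NegDefOnOrth.of_pos hsym hv hx₀.1
  have hge'x₀ : 0 < B (g e') x₀ := hgiso.inner_pos_of_fixed_isotropic hsym hx₀' he.1
    (he.inner_pos hsym hx₀') hge he'.1 (he'.inner_pos hsym hx₀')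
  have hcusp : IsLatticeCusp B x₀ (g e') := he'.map hgiso hgD hge'x₀.le
  have hfixed : g' (g e') = g e' := by
    simpa [hg'e'] using (LinearEquiv.congr_fun hcomm e').symm
  exact huniqg' _ hcusp hfixed

/-- from the proof of Theorem 3.9, (b) ⇒ (c): let `g, g' ∈ Aut(𝒟_L)`
be commuting symmetries of a hyperbolic lattice, each fixing a unique cusp (`e` and
`e'` respectively), with `g'` of infinite order.  Then `g(e') = e'` (if `g(e') ≠ e'`
then `g'` would fix the vector `e' + g(e')` of positive square, contradicting that
`g'` has infinite order). -/
theorem stmt18 (L : Type*) [AddCommGroup L] [Module ℤ L]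
    [Module.Free ℤ L] [Module.Finite ℤ L]
    (B : L →ₗ[ℤ] L →ₗ[ℤ] ℤ)
    (hsym : ∀ x y : L, B x y = B y x)
    (heven : ∀ x : L, ∃ c : ℤ, B x x = 2 * c)
    (hnondeg : ∀ x : L, (∀ y : L, B x y = 0) → x = 0)
    (hhyp : ∃ v : L, 0 < B v v ∧ ∀ x : L, B v x = 0 → x ≠ 0 → B x x < 0)
    (x₀ : L) (hx₀ : GenericPoint B x₀)
    (g g' : L ≃ₗ[ℤ] L)
    (hgiso : IsIsometry B g) (hg'iso : IsIsometry B g')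
    (hgD : ⇑g '' PosRoots B x₀ = PosRoots B x₀)
    (hg'D : ⇑g' '' PosRoots B x₀ = PosRoots B x₀)
    (e e' : L) (he : IsLatticeCusp B x₀ e) (he' : IsLatticeCusp B x₀ e')
    (hge : g e = e) (hg'e' : g' e' = e')
    -- e is the unique cusp fixed by g, e' the unique cusp fixed by g'
    (huniqg : ∀ c : L, IsLatticeCusp B x₀ c → g c = c → c = e)
    (huniqg' : ∀ c : L, IsLatticeCusp B x₀ c → g' c = c → c = e')
    (hcomm : g * g' = g' * g)
    (hinf : ¬ IsOfFinOrder g') :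
    g e' = e' :=
  stmt18_general L B hsym hhyp x₀ hx₀ g g' hgiso hgD e e' he he' hge hg'e' huniqg' hcomm
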